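/- arXiv:1501.02289 — 5 statements merged into one kernel-verified Lean document; each statement's English description precedes it below -/
import Mathlib

section
/- For every natural number i, ∫₀¹ (u² + 1)/(1 + u)⁴ · ((1 - u)/(1 + u))^(2i) du = (i + 1) / (4 · (i + 1/2) · (i + 3/2)). -/
/-!
Substituting `t = (1 - u) / (1 + u)`, which maps `[0, 1]` onto itself with
`dt = -2 du / (1 + u)²` and `1 + t² = 2 (1 + u²) / (1 + u)²`, turns the integral into
`¼ ∫₀¹ (1 + t²) t^(2i) dt = ¼ (1 / (2i + 1) + 1 / (2i + 3))`.
-/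

open Set intervalIntegral

lemma one_add_ne_zero_of_mem_uIcc {u : ℝ} (hu : u ∈ uIcc (0:ℝ) 1) : 1 + u ≠ 0 := by
  rw [uIcc_of_le zero_le_one] at hu
  linarith [hu.1]

lemma hasDerivAt_one_sub_div_one_add {u : ℝ} (hu : 1 + u ≠ 0) :
    HasDerivAt (fun u : ℝ => (1 - u) / (1 + u)) (-2 / (1 + u) ^ 2) u := by
  refine (((hasDerivAt_id' u).const_sub 1).div ((hasDerivAt_id' u).const_add 1) hu).congr_deriv ?_
  ring

lemma integral_comp_one_sub_div_one_add {g : ℝ → ℝ} (hg : Continuous g) :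
    ∫ u in (0:ℝ)..1, g ((1 - u) / (1 + u)) * (2 / (1 + u) ^ 2) = ∫ t in (0:ℝ)..1, g t := by
  have hsubst := integral_comp_mul_deriv
    (fun u hu => hasDerivAt_one_sub_div_one_add (one_add_ne_zero_of_mem_uIcc hu))
    (continuousOn_const.div (by fun_prop) fun u hu =>
      pow_ne_zero 2 (one_add_ne_zero_of_mem_uIcc hu))
    hg
  norm_num at hsubst
  calc ∫ u in (0:ℝ)..1, g ((1 - u) / (1 + u)) * (2 / (1 + u) ^ 2)
      = -∫ u in (0:ℝ)..1, g ((1 - u) / (1 + u)) * (-2 / (1 + u) ^ 2) := by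
        simp only [neg_div, mul_neg, integral_neg, neg_neg]
    _ = ∫ t in (0:ℝ)..1, g t := by rw [hsubst, integral_symm, neg_neg]

lemma integral_one_add_sq_mul_pow (n : ℕ) :
    ∫ t : ℝ in 0..1, (1 + t ^ 2) * t ^ n = 1 / ((n : ℝ) + 1) + 1 / ((n : ℝ) + 3) := by
  simp only [add_mul, one_mul, ← pow_add]
  rw [integral_add ((continuous_pow n).intervalIntegrable 0 1)
    ((continuous_pow _).intervalIntegrable 0 1), integral_pow, integral_pow]
  push_cast
  ring

theorem rational_integral_i (i : ℕ) :
    ∫ u in (0:ℝ)..1, (u^2 + 1) / (1 + u)^4 * ((1 - u) / (1 + u))^(2*i) =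
      ((i:ℝ) + 1) / (4 * ((i:ℝ) + 1/2) * ((i:ℝ) + 3/2)) := by
  have hintegrand : ∀ u ∈ uIcc (0:ℝ) 1,
      (u^2 + 1) / (1 + u)^4 * ((1 - u) / (1 + u))^(2*i) =
        (1 + ((1 - u) / (1 + u)) ^ 2) * ((1 - u) / (1 + u)) ^ (2 * i) / 4 * (2 / (1 + u) ^ 2) := by
    intro u hu
    have := one_add_ne_zero_of_mem_uIcc hu
    field_simp
    ring
  rw [integral_congr hintegrand,
    integral_comp_one_sub_div_one_add (g := fun t => (1 + t ^ 2) * t ^ (2 * i) / 4) (by fun_prop),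
    integral_div, integral_one_add_sq_mul_pow]
  field_simp
  push_cast
  ring
end

section
/- For every natural number n ≥ 1, every real k > -1, and every real α ≥ 1, the function v ↦ ∑_{j=0}^{n-1} (-1)^(j+1) · (1-n)_j / ((k+1)_(j+1)) · v^(n-1-j) · (1-v)^(k+j+1) has derivative v ↦ v^(n-1) · (1-v)^k at every v ∈ (0,1), where (t)_j is the Pochhammer symbol. (Here n plays the role of the integer parameter α.) -/
/-!
Write `c_j = (-1)^(j+1) (1-n)_j / (k+1)_(j+1)`. Each summand `c_j v^(n-1-j) (1-v)^(k+j+1)`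
differentiates to `D_{j+1} - D_j`, where `D_j = c_j (k+j+1) v^(n-1-j) (1-v)^(k+j)`: the product
rule splits the derivative in two, and the recursion `c_{j+1} (k+j+2) = c_j (n-1-j)` of the
Pochhammer quotients matches the first half of the `j`-th term with the second half of the
`(j+1)`-st. The sum telescopes to `D_n - D_0`, where `D_n = 0` because `(1-n)_n = 0`, and
`D_0 = -v^(n-1) (1-v)^k`.
-/

/-- Pochhammer symbol (rising factorial) on the reals. -/
def poch (t : ℝ) : ℕ → ℝ
  | 0 => 1
  | n + 1 => poch t n * (t + n)

open Finset

lemma poch_neg_natCast_succ (m : ℕ) : poch (-(m : ℝ)) (m + 1) = 0 := by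
  simp [poch]

noncomputable def antiderivCoeff (n : ℕ) (k : ℝ) (j : ℕ) : ℝ :=
  (-1 : ℝ) ^ (j + 1) * poch (1 - (n : ℝ)) j / poch (k + 1) (j + 1)

lemma antiderivCoeff_succ_mul (n : ℕ) {k : ℝ} (j : ℕ) (hk : k + j + 2 ≠ 0) :
    antiderivCoeff n k (j + 1) * (k + j + 2) = antiderivCoeff n k j * (n - 1 - j) := by
  have hk' : k + 1 + ((j + 1 : ℕ) : ℝ) ≠ 0 := by push_cast; contrapose! hk; linarith
  simp only [antiderivCoeff, poch]
  field_simp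
  push_cast
  ring

lemma antiderivCoeff_zero_mul (n : ℕ) {k : ℝ} (hk : k + 1 ≠ 0) :
    antiderivCoeff n k 0 * (k + 1) = -1 := by
  simp only [antiderivCoeff, poch]
  norm_num
  field_simp

lemma antiderivCoeff_self (m : ℕ) (k : ℝ) : antiderivCoeff (m + 1) k (m + 1) = 0 := by
  simp [antiderivCoeff, poch_neg_natCast_succ]

lemma hasDerivAt_pow_mul_one_sub_rpow (p : ℕ) (s : ℝ) {v : ℝ} (hv : v ≠ 1) :
    HasDerivAt (fun v : ℝ => v ^ p * (1 - v) ^ s)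
      (p * v ^ (p - 1) * (1 - v) ^ s - s * v ^ p * (1 - v) ^ (s - 1)) v := by
  have hbase : HasDerivAt (fun v : ℝ => 1 - v) (-1) v := by
    simpa using (hasDerivAt_id v).const_sub (1 : ℝ)
  have hrpow := hbase.rpow_const (p := s) (Or.inl (sub_ne_zero.mpr hv.symm))
  exact ((hasDerivAt_pow p v).fun_mul hrpow).congr_deriv (by ring)

/-- `D_j` above. -/
noncomputable def antiderivBoundary (n : ℕ) (k v : ℝ) (j : ℕ) : ℝ :=
  antiderivCoeff n k j * (k + j + 1) * v ^ (n - 1 - j) * (1 - v) ^ (k + j)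

lemma antiderivBoundary_zero (n : ℕ) {k : ℝ} (hk : k + 1 ≠ 0) (v : ℝ) :
    antiderivBoundary n k v 0 = -(v ^ (n - 1) * (1 - v) ^ k) := by
  have h := antiderivCoeff_zero_mul n hk
  simp only [antiderivBoundary, Nat.cast_zero, add_zero, Nat.sub_zero, h]
  ring

lemma antiderivBoundary_self (m : ℕ) (k v : ℝ) : antiderivBoundary (m + 1) k v (m + 1) = 0 := by
  simp [antiderivBoundary, antiderivCoeff_self]

lemma hasDerivAt_antiderivTerm {n : ℕ} {k v : ℝ} (hk : -1 < k) (hv : v ≠ 1) {j : ℕ}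
    (hj : j < n) :
    HasDerivAt (fun v : ℝ => antiderivCoeff n k j * v ^ (n - 1 - j) * (1 - v) ^ (k + j + 1))
      (antiderivBoundary n k v (j + 1) - antiderivBoundary n k v j) v := by
  have hrec := antiderivCoeff_succ_mul n j (k := k) (by have := j.cast_nonneg (α := ℝ); linarith)
  have hcast : ((n - 1 - j : ℕ) : ℝ) = n - 1 - j := by
    rw [Nat.cast_sub (by omega), Nat.cast_sub (by omega)]; simp
  have hterm := (hasDerivAt_pow_mul_one_sub_rpow (n - 1 - j) (k + j + 1) hv).const_mul
    (antiderivCoeff n k j)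
  simp only [← mul_assoc] at hterm
  refine hterm.congr_deriv ?_
  rw [hcast]
  simp only [antiderivBoundary, Nat.sub_sub]
  push_cast
  rw [show k + (j + 1 : ℝ) + 1 = k + j + 2 by ring, show k + (j + 1 : ℝ) = k + j + 1 by ring,
    show k + j + 1 - 1 = k + j by ring]
  linear_combination -(v ^ (n - (1 + j + 1)) * (1 - v) ^ (k + j + 1)) * hrec

theorem antiderivative_formula (n : ℕ) (hn : 1 ≤ n) (k : ℝ) (hk : -1 < k)
    (v : ℝ) (hv : v ∈ Set.Ioo (0:ℝ) 1) :
    HasDerivAt (fun v : ℝ => ∑ j ∈ Finset.range n,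
        (-1:ℝ)^(j+1) * poch (1 - (n:ℝ)) j / poch (k + 1) (j + 1) *
          v^(n - 1 - j) * (1 - v) ^ (k + (j:ℝ) + 1))
      (v^(n-1) * (1 - v) ^ k) v := by
  obtain ⟨m, rfl⟩ : ∃ m, n = m + 1 := ⟨n - 1, by omega⟩
  have hsum := HasDerivAt.fun_sum (u := range (m + 1)) fun j hj =>
    hasDerivAt_antiderivTerm (n := m + 1) hk hv.2.ne (mem_range.mp hj)
  rwa [sum_range_sub, antiderivBoundary_self, antiderivBoundary_zero _ (by linarith),
    sub_neg_eq_add, zero_add] at hsum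
end

section
/- Define S(m,n) = ∑_{i=0}^{m} ∑_{j=0}^{n} [(-m)_i (n+1)_i / (i! (m+n+2)_i)] · [(-n)_j (1/2 - n)_j / (j! (1/2)_j)] · 1/(i + j + 1/2) for natural numbers m, n. Then S(m,n) = 2^(2m+2n) · m! (m+n)! (m+n+1)! (1/2)_n / (n! (n+2m+1)! (1/2)_(m+n+1)). -/
open Finset intervalIntegral Nat
open MeasureTheory (volume)

lemma poch_natCast_add_one (a k : ℕ) : poch (a + 1) k = (a + k)! / a ! := by
  induction k with
  | zero => simp [poch, (factorial_pos a).ne']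
  | succ k ih =>
    rw [poch, ih, ← add_assoc, factorial_succ]
    push_cast
    field_simp
    ring

lemma poch_one (k : ℕ) : poch 1 k = k ! := by
  simpa using poch_natCast_add_one 0 k

lemma poch_neg_natCast (N k : ℕ) (h : k ≤ N) :
    poch (-N) k = (-1) ^ k * N ! / (N - k)! := by
  induction k with
  | zero => simp [poch, (factorial_pos N).ne']
  | succ k ih =>
    have hfact : ((N - k)! : ℝ) = (N - k : ℝ) * (N - (k + 1))! := by
      rw [show N - k = (N - (k + 1)) + 1 by omega, factorial_succ]
      push_cast [Nat.cast_sub h]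
      ring
    have hNk : (N : ℝ) - k ≠ 0 := by
      rw [sub_ne_zero]
      exact_mod_cast (by omega : N ≠ k)
    rw [poch, ih (by omega), hfact]
    field_simp
    ring

lemma poch_two_mul (t : ℝ) (k : ℕ) :
    poch t (2 * k) = 4 ^ k * poch (t / 2) k * poch ((t + 1) / 2) k := by
  induction k with
  | zero => simp [poch]
  | succ k ih =>
    rw [show 2 * (k + 1) = 2 * k + 1 + 1 by ring, poch, poch, ih, poch, poch]
    push_cast
    ring

lemma poch_half (k : ℕ) : poch (1 / 2) k = (2 * k)! / (4 ^ k * k !) := by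
  have h := poch_two_mul 1 k
  rw [show ((1:ℝ) + 1) / 2 = 1 by norm_num, poch_one, poch_one] at h
  rw [h]
  field_simp

lemma poch_neg_natCast_mul_poch_half_sub (N k : ℕ) (h : k ≤ N) :
    poch (-N) k * poch (1 / 2 - N) k = (2 * N)! / (4 ^ k * (2 * (N - k))!) := by
  have h2 := poch_two_mul (-(2 * N : ℕ)) k
  rw [poch_neg_natCast _ _ (by omega),
    show (-((2 * N : ℕ) : ℝ)) / 2 = -N by push_cast; ring,
    show (-((2 * N : ℕ) : ℝ) + 1) / 2 = 1 / 2 - N by push_cast; ring,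
    show 2 * N - 2 * k = 2 * (N - k) by omega, pow_mul, neg_one_sq, one_pow, one_mul] at h2
  rw [mul_comm (4 ^ k : ℝ), ← div_div, h2]
  field_simp

lemma hypergeometric_coeff_eq_choose_two_mul (n j : ℕ) (h : j ≤ n) :
    poch (-n) j * poch (1 / 2 - n) j / (j ! * poch (1 / 2) j) = (2 * n).choose (2 * j) := by
  rw [poch_neg_natCast_mul_poch_half_sub n j h, poch_half j,
    Nat.cast_choose ℝ (by omega : 2 * j ≤ 2 * n), show 2 * n - 2 * j = 2 * (n - j) by omega]
  field_simp

lemma integral_pow_mul_one_sub_pow (a b : ℕ) :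
    ∫ x in (0:ℝ)..1, x ^ a * (1 - x) ^ b = a ! * b ! / (a + b + 1)! := by
  apply Complex.ofReal_injective
  have h := Complex.betaIntegral_eq_Gamma_mul_div (a + 1) (b + 1)
    (by simp; positivity) (by simp; positivity)
  rw [Complex.betaIntegral,
    show (a : ℂ) + 1 + (b + 1) = ((a + b + 1 : ℕ) : ℂ) + 1 by push_cast; ring,
    Complex.Gamma_nat_eq_factorial, Complex.Gamma_nat_eq_factorial,
    Complex.Gamma_nat_eq_factorial] at h
  simp only [add_sub_cancel_right, Complex.cpow_natCast] at h
  rw [← intervalIntegral.integral_ofReal]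
  push_cast
  exact h

lemma integral_one_sub_pow_mul_one_add_pow (a b : ℕ) :
    ∫ t in (-1:ℝ)..1, (1 - t) ^ a * (1 + t) ^ b = 2 ^ (a + b + 1) * a ! * b ! / (a + b + 1)! := by
  have h := integral_comp_mul_sub (fun t : ℝ => (1 - t) ^ a * (1 + t) ^ b) (a := 0) (b := 1)
    two_ne_zero 1
  have hsub : ∀ x : ℝ, (1 - (2 * x - 1)) ^ a * (1 + (2 * x - 1)) ^ b
      = 2 ^ (a + b) * (x ^ b * (1 - x) ^ a) := by
    intro x
    rw [show 1 - (2 * x - 1) = 2 * (1 - x) by ring, show 1 + (2 * x - 1) = 2 * x by ring,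
      mul_pow, mul_pow, pow_add]
    ring
  simp only [hsub, integral_const_mul, integral_pow_mul_one_sub_pow, smul_eq_mul] at h
  norm_num at h
  rw [add_comm b a] at h
  linear_combination (-2 : ℝ) * h

lemma integral_neg_one_one_pow_two_mul (k : ℕ) :
    ∫ t in (-1:ℝ)..1, t ^ (2 * k) = 2 / (2 * k + 1) := by
  rw [integral_pow, one_pow, Odd.neg_one_pow ⟨k, rfl⟩]
  push_cast
  ring

lemma integral_neg_one_one_pow_two_mul_add_one (k : ℕ) :
    ∫ t in (-1:ℝ)..1, t ^ (2 * k + 1) = 0 := by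
  rw [integral_pow, one_pow, Even.neg_one_pow ⟨k + 1, by ring⟩]
  simp

lemma sum_range_two_mul_add_one_eq_sum_even {M : Type*} [AddCommMonoid M] (f : ℕ → M)
    (hf : ∀ j, f (2 * j + 1) = 0) (n : ℕ) :
    ∑ k ∈ range (2 * n + 1), f k = ∑ j ∈ range (n + 1), f (2 * j) := by
  induction n with
  | zero => simp
  | succ n ih =>
    rw [show 2 * (n + 1) + 1 = 2 * n + 1 + 1 + 1 by ring, sum_range_succ, sum_range_succ, ih, hf,
      sum_range_succ _ (n + 1), add_zero]
    rfl

lemma sum_choose_two_mul_mul_one_div (n i : ℕ) :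
    ∑ j ∈ range (n + 1), ((2 * n).choose (2 * j) : ℝ) * (1 / ((i : ℝ) + j + 1 / 2))
      = ∫ t in (-1:ℝ)..1, t ^ (2 * i) * (1 + t) ^ (2 * n) := by
  have hexpand : ∀ t : ℝ, t ^ (2 * i) * (1 + t) ^ (2 * n)
      = ∑ k ∈ range (2 * n + 1), ((2 * n).choose k : ℝ) * t ^ (2 * i + k) := by
    intro t
    rw [add_comm, add_pow, mul_sum]
    refine sum_congr rfl fun k _ => ?_
    rw [one_pow, pow_add]
    ring
  simp_rw [hexpand]
  rw [integral_finsetSum fun k _ => by apply Continuous.intervalIntegrable; fun_prop,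
    sum_range_two_mul_add_one_eq_sum_even _ fun j => by
      rw [integral_const_mul, show 2 * i + (2 * j + 1) = 2 * (i + j) + 1 by ring,
        integral_neg_one_one_pow_two_mul_add_one, mul_zero]]
  refine sum_congr rfl fun j _ => ?_
  rw [integral_const_mul, ← mul_add, integral_neg_one_one_pow_two_mul]
  push_cast
  field_simp

lemma sum_hypergeometric_coeff_mul_one_div (n i : ℕ) :
    ∑ j ∈ range (n + 1),
        poch (-n) j * poch (1 / 2 - n) j / (j ! * poch (1 / 2) j) * (1 / ((i : ℝ) + j + 1 / 2))
      = ∫ t in (-1:ℝ)..1, t ^ (2 * i) * (1 + t) ^ (2 * n) := by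
  rw [← sum_choose_two_mul_mul_one_div]
  exact sum_congr rfl fun j hj => by
    rw [hypergeometric_coeff_eq_choose_two_mul n j (mem_range_succ_iff.mp hj)]

lemma hypergeometric_coeff_eq_integral (m n i : ℕ) (h : i ≤ m) :
    poch (-m) i * poch (n + 1) i / (i ! * poch (m + n + 2) i)
      = (m + n + 1)! / (n ! * m !)
        * ∫ x in (0:ℝ)..1, (-1) ^ i * m.choose i * (x ^ (n + i) * (1 - x) ^ m) := by
  rw [show (m : ℝ) + n + 2 = ((m + n + 1 : ℕ) : ℝ) + 1 by push_cast; ring,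
    poch_natCast_add_one, poch_natCast_add_one, poch_neg_natCast m i h, integral_const_mul,
    integral_pow_mul_one_sub_pow, Nat.cast_choose ℝ h, show n + i + m + 1 = m + n + 1 + i by ring]
  field_simp

lemma sum_integral_mul_integral {ι : Type*} (s : Finset ι) (f g : ι → ℝ → ℝ) {a b c d : ℝ}
    (hf : ∀ i ∈ s, IntervalIntegrable (f i) volume a b)
    (hg : ∀ i ∈ s, IntervalIntegrable (g i) volume c d) :
    ∑ i ∈ s, (∫ x in a..b, f i x) * (∫ y in c..d, g i y)
      = ∫ x in a..b, ∫ y in c..d, ∑ i ∈ s, f i x * g i y := by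
  have hinner : ∀ x, ∫ y in c..d, ∑ i ∈ s, f i x * g i y = ∑ i ∈ s, f i x * ∫ y in c..d, g i y :=
    fun x => by
      rw [integral_finsetSum fun i hi => (hg i hi).const_mul _]
      simp only [integral_const_mul]
  simp_rw [hinner]
  rw [integral_finsetSum fun i hi => (hf i hi).mul_const _]
  simp only [integral_mul_const]

lemma sum_integral_mul_integral_congr {ι κ : Type*} {s : Finset ι} {t : Finset κ}
    {f g : ι → ℝ → ℝ} {f' g' : κ → ℝ → ℝ} {a b c d : ℝ}
    (hf : ∀ i ∈ s, IntervalIntegrable (f i) volume a b)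
    (hg : ∀ i ∈ s, IntervalIntegrable (g i) volume c d)
    (hf' : ∀ k ∈ t, IntervalIntegrable (f' k) volume a b)
    (hg' : ∀ k ∈ t, IntervalIntegrable (g' k) volume c d)
    (h : ∀ x y, ∑ i ∈ s, f i x * g i y = ∑ k ∈ t, f' k x * g' k y) :
    ∑ i ∈ s, (∫ x in a..b, f i x) * (∫ y in c..d, g i y)
      = ∑ k ∈ t, (∫ x in a..b, f' k x) * (∫ y in c..d, g' k y) := by
  simp_rw [sum_integral_mul_integral s f g hf hg, sum_integral_mul_integral t f' g' hf' hg', h]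

lemma sum_neg_one_pow_choose_mul_eq_sum_choose_mul {R : Type*} [CommRing R] (m n : ℕ) (x t : R) :
    ∑ i ∈ range (m + 1), ((-1) ^ i * m.choose i * (x ^ (n + i) * (1 - x) ^ m))
        * (t ^ (2 * i) * (1 + t) ^ (2 * n))
      = ∑ s ∈ range (m + 1), (m.choose s * (x ^ (n + s) * (1 - x) ^ (2 * m - s)))
        * ((1 - t) ^ s * (1 + t) ^ (2 * n + s)) := by
  have hleft : (-(x * t ^ 2) + 1) ^ m
      = ∑ i ∈ range (m + 1), (-1) ^ i * m.choose i * x ^ i * t ^ (2 * i) := by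
    rw [add_pow]
    refine sum_congr rfl fun i _ => ?_
    rw [neg_pow, mul_pow, pow_mul]
    ring
  have hright : (x * ((1 - t) * (1 + t)) + (1 - x)) ^ m
      = ∑ s ∈ range (m + 1), m.choose s * x ^ s * (1 - x) ^ (m - s) * (1 - t) ^ s * (1 + t) ^ s := by
    rw [add_pow]
    refine sum_congr rfl fun s _ => ?_
    rw [mul_pow, mul_pow]
    ring
  calc _ = x ^ n * (1 - x) ^ m * (1 + t) ^ (2 * n) * (-(x * t ^ 2) + 1) ^ m := by
        rw [hleft, mul_sum]
        refine sum_congr rfl fun i _ => ?_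
        rw [pow_add]
        ring
    _ = x ^ n * (1 - x) ^ m * (1 + t) ^ (2 * n) * (x * ((1 - t) * (1 + t)) + (1 - x)) ^ m := by
        ring
    _ = _ := by
        rw [hright, mul_sum]
        refine sum_congr rfl fun s hs => ?_
        rw [show 2 * m - s = m + (m - s) by have := mem_range_succ_iff.mp hs; omega,
          pow_add, pow_add, pow_add]
        ring

noncomputable def reducedTerm (n m s : ℕ) : ℝ :=
  (n + s)! * (2 * m - s)! * 4 ^ s * (2 * n + s)! / ((m - s)! * (2 * n + 2 * s + 1)!)

lemma choose_mul_integral_mul_integral (m n s : ℕ) (h : s ≤ m) :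
    (∫ x in (0:ℝ)..1, (m.choose s : ℝ) * (x ^ (n + s) * (1 - x) ^ (2 * m - s)))
        * ∫ t in (-1:ℝ)..1, (1 - t) ^ s * (1 + t) ^ (2 * n + s)
      = 2 ^ (2 * n + 1) * m ! / (2 * m + n + 1)! * reducedTerm n m s := by
  rw [integral_const_mul, integral_pow_mul_one_sub_pow, integral_one_sub_pow_mul_one_add_pow,
    Nat.cast_choose ℝ h, show n + s + (2 * m - s) + 1 = 2 * m + n + 1 by omega,
    show (2:ℝ) ^ (s + (2 * n + s) + 1) = 2 ^ (2 * n + 1) * 4 ^ s by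
      rw [show (4:ℝ) = 2 ^ 2 by norm_num, ← pow_mul, ← pow_add]; ring_nf,
    show s + (2 * n + s) + 1 = 2 * n + 2 * s + 1 by ring, reducedTerm]
  field_simp

lemma sum_range_succ_eq_mul_of_telescoping {R : Type*} [CommRing R] {f g G : ℕ → R} {c : R}
    {m : ℕ} (hstep : ∀ s ≤ m, f s = c * g s + (G (s + 1) - G s)) (hzero : G 0 = 0)
    (htop : G (m + 1) = -f (m + 1)) :
    ∑ s ∈ range (m + 2), f s = c * ∑ s ∈ range (m + 1), g s := by
  rw [sum_range_succ, sum_congr rfl fun s hs => hstep s (mem_range_succ_iff.mp hs),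
    sum_add_distrib, ← mul_sum, sum_range_sub, hzero, htop]
  ring

-- Certificate found by Zeilberger's algorithm for the sum over `s` of `reducedTerm n m s`.
noncomputable def reducedTermCert (n m s : ℕ) : ℝ :=
  -(s * (2 * s + 2 * n + 1) * (n + s)! * (2 * m + 1 - s)! * 4 ^ s * (2 * n + s)!)
    / ((2 * m + 2 * n + 3) * ((m + 1 - s)! * (2 * n + 2 * s + 1)!))

lemma reducedTerm_succ_eq (n m s : ℕ) (hs : s ≤ m) :
    reducedTerm n (m + 1) s = 8 * (m + 1) * (m + n + 1) / (2 * m + 2 * n + 3) * reducedTerm n m s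
      + (reducedTermCert n m (s + 1) - reducedTermCert n m s) := by
  obtain ⟨u, rfl⟩ : ∃ u, m = s + u := ⟨m - s, by omega⟩
  simp only [reducedTerm, reducedTermCert]
  rw [show 2 * (s + u + 1) - s = s + 2 * u + 2 by omega, show s + u + 1 - s = u + 1 by omega,
    show 2 * (s + u) - s = s + 2 * u by omega, show s + u - s = u by omega,
    show 2 * (s + u) + 1 - (s + 1) = s + 2 * u by omega, show s + u + 1 - (s + 1) = u by omega,
    show 2 * (s + u) + 1 - s = s + 2 * u + 1 by omega]
  simp only [mul_add, ← add_assoc, factorial_succ, pow_succ]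
  push_cast
  field_simp
  ring

lemma reducedTermCert_zero (n m : ℕ) : reducedTermCert n m 0 = 0 := by
  simp [reducedTermCert]

lemma reducedTermCert_succ_self (n m : ℕ) :
    reducedTermCert n m (m + 1) = -reducedTerm n (m + 1) (m + 1) := by
  simp only [reducedTerm, reducedTermCert]
  rw [show 2 * m + 1 - (m + 1) = m by omega, show 2 * (m + 1) - (m + 1) = m + 1 by omega,
    Nat.sub_self]
  simp only [mul_add, ← add_assoc, factorial_succ]
  push_cast
  field_simp
  ring

lemma sum_reducedTerm (n m : ℕ) :
    ∑ s ∈ range (m + 1), reducedTerm n m s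
      = 2 ^ (4 * m + 1) * m ! * (m + n)! * (m + n + 1)! * (2 * n)! / (n ! * (2 * m + 2 * n + 2)!) := by
  induction m with
  | zero =>
    rw [sum_range_one]
    simp only [reducedTerm, mul_zero, zero_add, add_zero, Nat.sub_zero, factorial_succ]
    push_cast
    field_simp
    ring
  | succ m ih =>
    rw [sum_range_succ_eq_mul_of_telescoping (reducedTerm_succ_eq n m) (reducedTermCert_zero n m)
      (reducedTermCert_succ_self n m), ih, show 4 * (m + 1) + 1 = 4 * m + 1 + 4 by ring,
      show m + 1 + n = m + n + 1 by ring,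
      show 2 * (m + 1) + 2 * n + 2 = 2 * m + 2 * n + 2 + 2 by ring, pow_add]
    simp only [factorial_succ]
    push_cast
    field_simp
    ring

theorem S_formula (m n : ℕ) :
    (∑ i ∈ Finset.range (m + 1), ∑ j ∈ Finset.range (n + 1),
      (poch (-(m:ℝ)) i * poch ((n:ℝ) + 1) i / ((i.factorial : ℝ) * poch ((m:ℝ) + (n:ℝ) + 2) i)) *
      (poch (-(n:ℝ)) j * poch (1/2 - (n:ℝ)) j / ((j.factorial : ℝ) * poch (1/2) j)) *
      (1 / ((i:ℝ) + (j:ℝ) + 1/2))) =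
    2^(2*m+2*n) * ((m.factorial : ℝ) * ((m+n).factorial : ℝ) * ((m+n+1).factorial : ℝ) *
        poch (1/2) n) /
      ((n.factorial : ℝ) * ((n + 2*m + 1).factorial : ℝ) * poch (1/2) (m + n + 1)) := by
  simp_rw [mul_assoc, ← mul_sum, sum_hypergeometric_coeff_mul_one_div]
  rw [sum_congr rfl fun i hi => by
      rw [hypergeometric_coeff_eq_integral m n i (mem_range_succ_iff.mp hi), mul_assoc],
    ← mul_sum, sum_integral_mul_integral_congr ?_ ?_ ?_ ?_
      (sum_neg_one_pow_choose_mul_eq_sum_choose_mul m n),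
    sum_congr rfl fun s hs => choose_mul_integral_mul_integral m n s (mem_range_succ_iff.mp hs),
    ← mul_sum, sum_reducedTerm, poch_half, poch_half,
    show 2 * (m + n + 1) = 2 * m + 2 * n + 2 by ring, show n + 2 * m + 1 = 2 * m + n + 1 by ring,
    show (4:ℝ) = 2 ^ 2 by norm_num, ← pow_mul, ← pow_mul]
  · field_simp
    ring
  all_goals exact fun _ _ => Continuous.intervalIntegrable (by fun_prop) _ _
end

section
/- For every real α > 0, let I_α = (π / 2^(2+8α)) · Γ(2α)² / (Γ(2α + 3/2) Γ(2α + 5/2)). If 2α is a positive integer, then 1/I_α = 2(4α+3) · C(2α+2, 2)² · C(4α+1, 2α+2)², where C denotes the binomial coefficient; in particular 1/I_α is a positive integer. -/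
/-! Legendre's duplication formula writes `Γ(s + 3/2)` and `Γ(s + 5/2)` as `Γ(2s + 2)` and
`Γ(2s + 4)` times `√π` and powers of two; the product of the two `√π` cancels `π` and the powers
of two cancel `2 ^ (2 + 4s)` up to a factor `4`. For `s = m` a natural number every remaining
Gamma value is a factorial, and the claim becomes an identity between factorials and binomial
coefficients. -/

open Real
open scoped Nat

theorem Nat.factorial_two_mul_add_one_mul_factorial_two_mul_add_three {m : ℕ} (hm : 1 ≤ m) :
    (2*m + 1)! * (2*m + 3)! = 2 * (2*m + 3) * (m + 2).choose 2 ^ 2 *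
      (2*m + 1).choose (m + 2) ^ 2 * (4 * m ! * (m + 1)! * (m - 1)! ^ 2) := by
  have h1 := Nat.choose_mul_factorial_mul_factorial (show 2 ≤ m + 2 by omega)
  have h2 := Nat.choose_mul_factorial_mul_factorial (show m + 2 ≤ 2*m + 1 by omega)
  rw [Nat.add_sub_cancel] at h1
  rw [show 2*m + 1 - (m + 2) = m - 1 by omega] at h2
  rw [Nat.factorial_succ (2*m + 2), Nat.factorial_succ (2*m + 1), ← h2, ← h1,
    Nat.factorial_succ m, Nat.factorial_two]
  ring

theorem Real.Gamma_add_half_eq_div {s : ℝ} (hs : Gamma s ≠ 0) :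
    Gamma (s + 1/2) = Gamma (2*s) * 2 ^ (1 - 2*s) * √π / Gamma s :=
  eq_div_of_mul_eq hs (by rw [mul_comm]; exact Gamma_mul_Gamma_add_half s)

theorem Real.inv_pi_div_mul_Gamma_ratio_eq {s : ℝ} (hs : 0 < s) :
    (π / 2 ^ (2 + 4*s) * (Gamma s ^ 2 / (Gamma (s + 3/2) * Gamma (s + 5/2))))⁻¹
      = Gamma (2*s + 2) * Gamma (2*s + 4) / (4 * Gamma (s + 1) * Gamma (s + 2) * Gamma s ^ 2) := by
  have hΓs := Gamma_pos_of_pos hs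
  have hΓs₁ := Gamma_pos_of_pos (show 0 < s + 1 by linarith)
  have hΓs₂ := Gamma_pos_of_pos (show 0 < s + 2 by linarith)
  rw [show s + 3/2 = (s + 1) + 1/2 by ring, show s + 5/2 = (s + 2) + 1/2 by ring,
    Gamma_add_half_eq_div hΓs₁.ne', Gamma_add_half_eq_div hΓs₂.ne',
    show 2*(s + 1) = 2*s + 2 by ring, show 2*(s + 2) = 2*s + 4 by ring]
  have hpow : (2:ℝ) ^ (2 + 4*s) * 2 ^ (1 - 2*(s + 1)) * 2 ^ (1 - (2*s + 4)) = 1/4 := by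
    rw [← rpow_add two_pos, ← rpow_add two_pos,
      show 2 + 4*s + (1 - 2*(s + 1)) + (1 - (2*s + 4)) = -2 by ring]
    norm_num
  field_simp
  rw [sq_sqrt pi_pos.le]
  linear_combination 4 * π * hpow

theorem inv_I_alpha_integer_general (m : ℕ) :
    (π / 2 ^ (2 + 8*((m:ℝ)/2)) *
      (Gamma (2*((m:ℝ)/2))^2 / (Gamma (2*((m:ℝ)/2) + 3/2) * Gamma (2*((m:ℝ)/2) + 5/2))))⁻¹ =
      ((2 * (2*m + 3) * (Nat.choose (m + 2) 2)^2 * (Nat.choose (2*m + 1) (m + 2))^2 : ℕ) : ℝ) := by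
  rcases m.eq_zero_or_pos with rfl | hm
  -- both sides are `0`: `Γ 0 = 0` in Mathlib and `Nat.choose 1 2 = 0`
  · simp
  have hΓ (n : ℕ) (x : ℝ) (hx : x = n + 1) : Gamma x = n ! := hx ▸ Gamma_nat_eq_factorial n
  rw [show 2 * ((m : ℝ) / 2) = m by ring, show 8 * ((m : ℝ) / 2) = 4 * m by ring,
    inv_pi_div_mul_Gamma_ratio_eq (by positivity), Gamma_nat_eq_factorial,
    hΓ (2*m + 1) (2*m + 2) (by push_cast; ring), hΓ (2*m + 3) (2*m + 4) (by push_cast; ring),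
    hΓ (m + 1) (m + 2) (by push_cast; ring), hΓ (m - 1) m (by rw [Nat.cast_sub hm]; ring),
    div_eq_iff (by positivity)]
  exact_mod_cast Nat.factorial_two_mul_add_one_mul_factorial_two_mul_add_three hm

theorem inv_I_alpha_integer (m : ℕ) (hm : 1 ≤ m) :
    (π / 2 ^ (2 + 8*((m:ℝ)/2)) *
      (Gamma (2*((m:ℝ)/2))^2 / (Gamma (2*((m:ℝ)/2) + 3/2) * Gamma (2*((m:ℝ)/2) + 5/2))))⁻¹ =
      ((2 * (2*m + 3) * (Nat.choose (m + 2) 2)^2 * (Nat.choose (2*m + 1) (m + 2))^2 : ℕ) : ℝ) :=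
  inv_I_alpha_integer_general m
end

section
/- Let ξ be the 4×4 Hermitian X-matrix with diagonal (t₁, t₂, t₃+t₆, t₄+t₅), (1,4)-entry √(t₁t₅)e^{iθ₅}, (2,3)-entry √(t₂t₆)e^{iθ₆}, where tᵢ ≥ 0 and θ₅, θ₆ ∈ ℝ. Then det ξ = t₁t₂t₃t₄ and det ξ^PT = (t₁t₄ + t₁t₅ - t₂t₆)(t₂t₃ + t₂t₆ - t₁t₅), where ξ^PT swaps the (1,4)/(2,3) off-diagonal entries (and their conjugates). -/
open Matrix

/-- The generic positive semidefinite complex X-matrix in the `t`-coordinates. -/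
noncomputable def xiMat (t₁ t₂ t₃ t₄ t₅ t₆ θ₅ θ₆ : ℝ) : Matrix (Fin 4) (Fin 4) ℂ :=
  !![(t₁ : ℂ), 0, 0, (Real.sqrt (t₁*t₅) : ℂ) * Complex.exp ((θ₅ : ℂ) * Complex.I);
     0, (t₂ : ℂ), (Real.sqrt (t₂*t₆) : ℂ) * Complex.exp ((θ₆ : ℂ) * Complex.I), 0;
     0, (Real.sqrt (t₂*t₆) : ℂ) * Complex.exp (-((θ₆ : ℂ) * Complex.I)), (t₃ : ℂ) + (t₆ : ℂ), 0;
     (Real.sqrt (t₁*t₅) : ℂ) * Complex.exp (-((θ₅ : ℂ) * Complex.I)), 0, 0, (t₄ : ℂ) + (t₅ : ℂ)]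

/-- The partial transpose of `xiMat`: the (1,4)/(2,3) off-diagonal entries are swapped. -/
noncomputable def xiMatPT (t₁ t₂ t₃ t₄ t₅ t₆ θ₅ θ₆ : ℝ) : Matrix (Fin 4) (Fin 4) ℂ :=
  !![(t₁ : ℂ), 0, 0, (Real.sqrt (t₂*t₆) : ℂ) * Complex.exp ((θ₆ : ℂ) * Complex.I);
     0, (t₂ : ℂ), (Real.sqrt (t₁*t₅) : ℂ) * Complex.exp ((θ₅ : ℂ) * Complex.I), 0;
     0, (Real.sqrt (t₁*t₅) : ℂ) * Complex.exp (-((θ₅ : ℂ) * Complex.I)), (t₃ : ℂ) + (t₆ : ℂ), 0;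
     (Real.sqrt (t₂*t₆) : ℂ) * Complex.exp (-((θ₆ : ℂ) * Complex.I)), 0, 0, (t₄ : ℂ) + (t₅ : ℂ)]

/-- An X-matrix is block diagonal for the pairing {1,4} ∪ {2,3} of indices, so its determinant
is the product of the determinants of the two 2 × 2 blocks. -/
theorem Matrix.det_fin_four_of_X {R : Type*} [CommRing R] (a b c d e f g h : R) :
    !![a, 0, 0, b; 0, c, d, 0; 0, e, f, 0; g, 0, 0, h].det = (a * h - b * g) * (c * f - d * e) := by
  simp [det_succ_row_zero, Fin.sum_univ_succ, Fin.succAbove]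
  ring

theorem Complex.ofReal_sqrt_mul_exp_mul_ofReal_sqrt_mul_exp_neg {x : ℝ} (hx : 0 ≤ x) (θ : ℝ) :
    (Real.sqrt x : ℂ) * exp (θ * I) * ((Real.sqrt x : ℂ) * exp (-(θ * I))) = x := by
  rw [mul_mul_mul_comm, ← exp_add, add_neg_cancel, exp_zero, mul_one, ← ofReal_mul,
    Real.mul_self_sqrt hx]

theorem det_xi_and_det_xiPT_general (t₁ t₂ t₃ t₄ t₅ t₆ θ₅ θ₆ : ℝ)
    (h1 : 0 ≤ t₁) (h2 : 0 ≤ t₂) (h5 : 0 ≤ t₅) (h6 : 0 ≤ t₆) :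
    (xiMat t₁ t₂ t₃ t₄ t₅ t₆ θ₅ θ₆).det = ((t₁*t₂*t₃*t₄ : ℝ) : ℂ) ∧
    (xiMatPT t₁ t₂ t₃ t₄ t₅ t₆ θ₅ θ₆).det =
      (((t₁*t₄ + t₁*t₅ - t₂*t₆) * (t₂*t₃ + t₂*t₆ - t₁*t₅) : ℝ) : ℂ) := by
  have h15 := Complex.ofReal_sqrt_mul_exp_mul_ofReal_sqrt_mul_exp_neg (mul_nonneg h1 h5) θ₅
  have h26 := Complex.ofReal_sqrt_mul_exp_mul_ofReal_sqrt_mul_exp_neg (mul_nonneg h2 h6) θ₆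
  constructor
  · rw [xiMat, det_fin_four_of_X, h15, h26]
    push_cast
    ring
  · rw [xiMatPT, det_fin_four_of_X, h15, h26]
    push_cast
    ring

theorem det_xi_and_det_xiPT (t₁ t₂ t₃ t₄ t₅ t₆ θ₅ θ₆ : ℝ)
    (h1 : 0 ≤ t₁) (h2 : 0 ≤ t₂) (h3 : 0 ≤ t₃) (h4 : 0 ≤ t₄) (h5 : 0 ≤ t₅) (h6 : 0 ≤ t₆) :
    (xiMat t₁ t₂ t₃ t₄ t₅ t₆ θ₅ θ₆).det = ((t₁*t₂*t₃*t₄ : ℝ) : ℂ) ∧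
    (xiMatPT t₁ t₂ t₃ t₄ t₅ t₆ θ₅ θ₆).det =
      (((t₁*t₄ + t₁*t₅ - t₂*t₆) * (t₂*t₃ + t₂*t₆ - t₁*t₅) : ℝ) : ℂ) :=
  det_xi_and_det_xiPT_general t₁ t₂ t₃ t₄ t₅ t₆ θ₅ θ₆ h1 h2 h5 h6
end
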